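/- Let y ∈ (−1,0) be a quadratic irrational and let R be the Rényi map R(y) = −1/y − ⌈−1/y⌉. Then y is purely periodic under R (i.e. R^[p](y) = y for some integer p ≥ 1) if and only if its Galois conjugate y' satisfies y' < −1. -/

import Mathlib

/-- The Rényi map `y ↦ -1/y - ⌈-1/y⌉` on irrationals in `(-1,0)`, extended by `0` elsewhere. -/
noncomputable def renyiMap (y : ℝ) : ℝ :=
  open Classical in
  if Irrational y ∧ y ∈ Set.Ioo (-1 : ℝ) 0 then -1 / y - ⌈-1 / y⌉ else 0

open Function Set

/-!
Write `z'` for the conjugate of `z` and `n = ⌈-1/z⌉`. One Rényi step sends `z ↦ -1/z - n`, and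
the conjugate follows the same Möbius map, `z' ↦ -1/z' - n`.

If `z' < -1`, the conjugate stays below `-1` along the orbit. Carrying an integer equation
`a X² + b X + c` along the orbit with `a > 0` keeps the discriminant fixed and bounds `a`, `b`, `c`
by it. So the orbit stays in a finite set, and `R` is injective on that set: since `-1/z' ∈ (0, 1)`,
the digit `n` can be read off from the conjugate of `R z`. Hence every point of the set is
periodic.

Conversely, read the orbit backwards: `z = -1/(n + R z)`. The map `x ↦ -1/(n + x)` with `n ≥ 2`
sends `(-1, ∞)` into `(-1, 0)` and is a strict contraction there. If `y` were periodic with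
`y' > -1`, a full period would strictly shrink `|y - y'|`.
-/

theorem Set.Finite.subset_periodicPts {α : Type*} {f : α → α} {s : Set α} (hs : s.Finite)
    (hf : MapsTo f s s) (hinj : InjOn f s) : s ⊆ periodicPts f := fun x hx => by
  have := hs.to_subtype
  exact (show Semiconj Subtype.val (hf.restrict f s s) f from fun _ => rfl).mapsTo_periodicPts
    ((hf.restrict_inj.mpr hinj).mem_periodicPts ⟨x, hx⟩)

/-- For irrational `z`, `z'` is the other root of the rational quadratic vanishing at `z`; unlike
`-b/a - z`, this does not depend on a choice of coefficients. -/
def IsGaloisConj (z z' : ℝ) : Prop :=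
  (∃ q : ℚ, z + z' = q) ∧ ∃ q : ℚ, z * z' = q

theorem isGaloisConj_of_root {y : ℝ} {a b c : ℤ} (ha : a ≠ 0)
    (hroot : (a : ℝ) * y ^ 2 + b * y + c = 0) : IsGaloisConj y (-b / a - y) := by
  have ha' : (a : ℝ) ≠ 0 := Int.cast_ne_zero.mpr ha
  refine ⟨⟨-b / a, by push_cast; ring⟩, ⟨c / a, ?_⟩⟩
  push_cast
  field_simp
  linear_combination -hroot

namespace IsGaloisConj

variable {z z' : ℝ}

theorem unique (hz : Irrational z) {z₁ z₂ : ℝ} (h₁ : IsGaloisConj z z₁) (h₂ : IsGaloisConj z z₂) :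
    z₁ = z₂ := by
  obtain ⟨⟨s₁, hs₁⟩, ⟨p₁, hp₁⟩⟩ := h₁
  obtain ⟨⟨s₂, hs₂⟩, ⟨p₂, hp₂⟩⟩ := h₂
  have hs : s₁ = s₂ := by
    by_contra hne
    have hne' : (s₁ : ℝ) - s₂ ≠ 0 := sub_ne_zero.mpr (by exact_mod_cast hne)
    refine hz ⟨(p₁ - p₂) / (s₁ - s₂), ?_⟩
    push_cast
    rw [div_eq_iff hne']
    linear_combination -hp₁ + hp₂ + z * hs₁ - z * hs₂
  linear_combination hs₁ - hs₂ + (congrArg ((↑) : ℚ → ℝ) hs)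

theorem irrational (hz : Irrational z) (h : IsGaloisConj z z') : Irrational z' := by
  obtain ⟨⟨s, hs⟩, -⟩ := h
  rw [show z' = s - z by linarith]
  exact hz.ratCast_sub s

theorem ne (hz : Irrational z) (h : IsGaloisConj z z') : z ≠ z' := by
  rintro rfl
  obtain ⟨⟨s, hs⟩, -⟩ := h
  exact hz ⟨s / 2, by push_cast; linarith⟩

theorem neg_one_div_sub_intCast (h : IsGaloisConj z z') (hz : z ≠ 0) (hz' : z' ≠ 0) (n : ℤ) :
    IsGaloisConj (-1 / z - n) (-1 / z' - n) := by
  obtain ⟨⟨s, hs⟩, ⟨p, hp⟩⟩ := h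
  refine ⟨⟨-s / p - 2 * n, ?_⟩, ⟨(1 + n * s) / p + n ^ 2, ?_⟩⟩ <;>
    · push_cast
      rw [← hs, ← hp]
      field_simp
      ring

end IsGaloisConj

def renyiDomain : Set ℝ := {y | Irrational y ∧ y ∈ Ioo (-1) 0}

theorem renyiMap_of_mem {y : ℝ} (hy : y ∈ renyiDomain) : renyiMap y = -1 / y - ⌈-1 / y⌉ :=
  if_pos hy

theorem two_le_ceil_neg_one_div {y : ℝ} (hy : y ∈ Ioo (-1 : ℝ) 0) : 2 ≤ ⌈-1 / y⌉ := by
  have h : (1 : ℝ) < -1 / y := by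
    rw [lt_div_iff_of_neg hy.2]
    linarith [hy.1]
  have : (1 : ℤ) < ⌈-1 / y⌉ := Int.lt_ceil.mpr (by exact_mod_cast h)
  omega

theorem mapsTo_renyiMap : MapsTo renyiMap renyiDomain renyiDomain := by
  intro y hy
  have hinv : Irrational (-1 / y) := by simpa [neg_div, one_div] using hy.1.inv.neg
  rw [renyiMap_of_mem hy]
  refine ⟨hinv.sub_intCast _, ?_, ?_⟩
  · linarith [Int.ceil_lt_add_one (-1 / y)]
  · exact sub_neg.mpr ((Int.le_ceil _).lt_of_ne (hinv.ne_int _))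

theorem IsGaloisConj.renyiMap {z z' : ℝ} (hz : z ∈ renyiDomain) (h : IsGaloisConj z z') :
    IsGaloisConj (renyiMap z) (-1 / z' - ⌈-1 / z⌉) := by
  rw [renyiMap_of_mem hz]
  exact h.neg_one_div_sub_intCast hz.1.ne_zero (h.irrational hz.1).ne_zero _

theorem neg_one_lt_neg_one_div_add {n x : ℝ} (hn : 2 ≤ n) (hx : -1 < x) : -1 < -1 / (n + x) := by
  rw [neg_div, neg_lt_neg_iff, div_lt_one (by linarith)]
  linarith

theorem abs_neg_one_div_add_sub_lt {n x x' : ℝ} (hn : 2 ≤ n) (hx : -1 < x) (hx' : -1 < x')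
    (hne : x ≠ x') : |-1 / (n + x) - -1 / (n + x')| < |x - x'| := by
  have hprod : 1 < (n + x) * (n + x') := by nlinarith
  have hsub : -1 / (n + x) - -1 / (n + x') = (x - x') / ((n + x) * (n + x')) := by
    field_simp [show n + x ≠ 0 by linarith, show n + x' ≠ 0 by linarith]
    ring
  rw [hsub, abs_div, abs_of_pos (by linarith : 0 < (n + x) * (n + x')), div_lt_iff₀ (by linarith)]
  nlinarith [abs_pos.mpr (sub_ne_zero.mpr hne)]

theorem abs_neg_one_div_add_sub_le {n x x' : ℝ} (hn : 2 ≤ n) (hx : -1 < x) (hx' : -1 < x') :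
    |-1 / (n + x) - -1 / (n + x')| ≤ |x - x'| := by
  rcases eq_or_ne x x' with rfl | hne
  · simp
  · exact (abs_neg_one_div_add_sub_lt hn hx hx' hne).le

theorem abs_sub_lt_of_recurrence {n u v : ℕ → ℝ} (hn : ∀ k, 2 ≤ n k)
    (hu : ∀ k, u (k + 1) = -1 / u k - n k) (hv : ∀ k, v (k + 1) = -1 / v k - n k) {p : ℕ}
    (hup : -1 < u (p + 1)) (hvp : -1 < v (p + 1)) (hne : u (p + 1) ≠ v (p + 1)) :
    |u 0 - v 0| < |u (p + 1) - v (p + 1)| := by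
  have backward {w : ℕ → ℝ} (hw : ∀ k, w (k + 1) = -1 / w k - n k) (k : ℕ) :
      w k = -1 / (n k + w (k + 1)) := by
    rw [hw k, add_sub_cancel, neg_div, one_div_div, div_neg, div_one, neg_neg]
  have hle (k : ℕ) (huk : -1 < u k) (hvk : -1 < v k) : |u 0 - v 0| ≤ |u k - v k| := by
    induction k with
    | zero => exact le_rfl
    | succ k ih =>
      calc |u 0 - v 0| ≤ |u k - v k| := by
            rw [backward hu k, backward hv k] at ih ⊢
            exact ih (neg_one_lt_neg_one_div_add (hn k) huk)
              (neg_one_lt_neg_one_div_add (hn k) hvk)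
        _ ≤ |u (k + 1) - v (k + 1)| := by
            rw [backward hu k, backward hv k]
            exact abs_neg_one_div_add_sub_le (hn k) huk hvk
  calc |u 0 - v 0| ≤ |u p - v p| := by
        refine hle p ?_ ?_
        · rw [backward hu p]; exact neg_one_lt_neg_one_div_add (hn p) hup
        · rw [backward hv p]; exact neg_one_lt_neg_one_div_add (hn p) hvp
    _ < |u (p + 1) - v (p + 1)| := by
        rw [backward hu p, backward hv p]
        exact abs_neg_one_div_add_sub_lt (hn p) hup hvp hne

theorem lt_neg_one_of_mem_periodicPts {y y' : ℝ} (hy : y ∈ renyiDomain) (hy' : IsGaloisConj y y')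
    (hper : y ∈ periodicPts renyiMap) : y' < -1 := by
  obtain ⟨_ | p, hp, hper⟩ := hper
  · exact absurd hp (lt_irrefl 0)
  set z : ℕ → ℝ := fun k => renyiMap^[k] y
  have hz (k : ℕ) : z k ∈ renyiDomain := mapsTo_renyiMap.iterate k hy
  have hz_succ (k : ℕ) : z (k + 1) = renyiMap (z k) := iterate_succ_apply' renyiMap k y
  have hz_period : z (p + 1) = y := hper
  have hconj (k : ℕ) : ∃ c, IsGaloisConj (z k) c := by
    induction k with
    | zero => exact ⟨y', hy'⟩
    | succ k ih =>
      obtain ⟨c, hc⟩ := ih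
      exact ⟨_, hz_succ k ▸ hc.renyiMap (hz k)⟩
  choose c hc using hconj
  have hc_succ (k : ℕ) : c (k + 1) = -1 / c k - ⌈-1 / z k⌉ :=
    (hc (k + 1)).unique (hz (k + 1)).1 (hz_succ k ▸ (hc k).renyiMap (hz k))
  have hc_zero : c 0 = y' := (hc 0).unique hy.1 hy'
  have hc_period : c (p + 1) = y' := (hc (p + 1)).unique (hz (p + 1)).1 (hz_period ▸ hy')
  by_contra hge
  have hy'_ne : y' ≠ -1 := by exact_mod_cast (hy'.irrational hy.1).ne_int (-1)
  have hy'_gt : -1 < y' := (not_lt.mp hge).lt_of_ne' hy'_ne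
  have key := abs_sub_lt_of_recurrence (n := fun k => (⌈-1 / z k⌉ : ℝ))
    (fun k => by exact_mod_cast two_le_ceil_neg_one_div (hz k).2)
    (fun k => by rw [hz_succ, renyiMap_of_mem (hz k)]) hc_succ (hz (p + 1)).2.1
    (hc_period ▸ hy'_gt) (by rw [hz_period, hc_period]; exact hy'.ne hy.1)
  rw [hz_period, hc_period, hc_zero] at key
  exact lt_irrefl _ key

theorem quadratic_eq_mul_sub_mul_sub {K : Type*} [Field K] {a b c z : K} (ha : a ≠ 0)
    (hroot : a * z ^ 2 + b * z + c = 0) (x : K) :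
    a * x ^ 2 + b * x + c = a * (x - z) * (x - (-b / a - z)) := by
  field_simp
  linear_combination hroot

theorem sqrt_discrim_eq_of_lt {a b c z : ℝ} (ha : 0 < a) (hroot : a * z ^ 2 + b * z + c = 0)
    (hlt : -b / a - z < z) : √(b ^ 2 - 4 * a * c) = 2 * a * z + b := by
  have hpos : 0 ≤ 2 * a * z + b := by
    have := (div_lt_iff₀ ha).mp (show -b / a < 2 * z by linarith)
    linarith
  rw [← Real.sqrt_sq hpos]
  congr 1
  linear_combination -4 * a * hroot

theorem neg_one_div_mem_Ioo {z' : ℝ} (hz' : z' < -1) : -1 / z' ∈ Ioo (0 : ℝ) 1 :=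
  ⟨div_pos_of_neg_of_neg (by norm_num) (by linarith),
    (div_lt_one_of_neg (by linarith)).mpr (by linarith)⟩

theorem pos_and_add_lt_of_reduced_root {a b c z : ℝ} (ha : 0 < a)
    (hroot : a * z ^ 2 + b * z + c = 0) (hz : z ∈ Ioo (-1 : ℝ) 0) (hz' : -b / a - z < -1) :
    0 < c ∧ a + c < b := by
  have hfac := quadratic_eq_mul_sub_mul_sub ha.ne' hroot
  have h0 := hfac 0
  have h1 := hfac (-1)
  obtain ⟨hz₁, hz₂⟩ := hz
  constructor
  · nlinarith [mul_pos ha (mul_pos (neg_pos.mpr hz₂) (by linarith : 0 < -(-b / a - z)))]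
  · nlinarith [mul_pos ha (mul_pos (by linarith : 0 < 1 + z) (by linarith : 0 < -1 - (-b / a - z)))]

def reducedSet (D : ℤ) : Set ℝ :=
  {z | z ∈ renyiDomain ∧ ∃ a b c : ℤ, 0 < a ∧ (a : ℝ) * z ^ 2 + b * z + c = 0 ∧
    b ^ 2 - 4 * a * c = D ∧ -(b : ℝ) / a - z < -1}

theorem mem_reducedSet_of_root {y : ℝ} {a b c : ℤ} (hy : y ∈ renyiDomain) (ha : a ≠ 0)
    (hroot : (a : ℝ) * y ^ 2 + b * y + c = 0) (hy' : -(b : ℝ) / a - y < -1) :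
    y ∈ reducedSet (b ^ 2 - 4 * a * c) := by
  rcases ha.lt_or_gt with ha | ha
  · refine ⟨hy, -a, -b, -c, by omega, by push_cast; linear_combination -hroot, by ring, ?_⟩
    push_cast
    rwa [neg_div_neg_eq]
  · exact ⟨hy, a, b, c, ha, hroot, rfl, hy'⟩

theorem finite_reducedSet (D : ℤ) : (reducedSet D).Finite := by
  refine (((finite_Icc 1 D).prod (finite_Icc 1 D)).image
    fun ab : ℤ × ℤ => (-ab.2 + √D) / (2 * ab.1)).subset ?_
  rintro z ⟨hz, a, b, c, ha, hroot, rfl, hz'⟩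
  obtain ⟨hc, hb⟩ := pos_and_add_lt_of_reduced_root (by exact_mod_cast ha) hroot hz.2 hz'
  replace hc : 0 < c := by exact_mod_cast hc
  replace hb : a + c < b := by exact_mod_cast hb
  have hbD : b ≤ b ^ 2 - 4 * a * c := by
    have hb' : a + c ≤ b - 1 := by omega
    nlinarith [sq_nonneg (a - c), mul_le_mul hb' hb' (by omega) (by omega)]
  have hsqrt := sqrt_discrim_eq_of_lt (by exact_mod_cast ha) hroot (by linarith [hz.2.1])
  refine ⟨(a, b), ?_, ?_⟩
  · simp only [mem_prod, mem_Icc]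
    exact ⟨⟨by omega, by linarith⟩, by omega, hbD⟩
  · dsimp only
    push_cast
    rw [hsqrt]
    field_simp
    ring

theorem mapsTo_renyiMap_reducedSet (D : ℤ) : MapsTo renyiMap (reducedSet D) (reducedSet D) := by
  rintro z ⟨hz, a, b, c, ha, hroot, rfl, hz'⟩
  set n := ⌈-1 / z⌉
  have hc : 0 < c := by
    exact_mod_cast (pos_and_add_lt_of_reduced_root (by exact_mod_cast ha) hroot hz.2 hz').1
  -- the substitution `z = -1/(n + w)` transforms `a X² + b X + c` into this equation
  have hroot' : ((c : ℤ) : ℝ) * renyiMap z ^ 2 + ((2 * c * n - b : ℤ) : ℝ) * renyiMap z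
      + ((c * n ^ 2 - b * n + a : ℤ) : ℝ) = 0 := by
    rw [show renyiMap z = -1 / z - n from renyiMap_of_mem hz]
    push_cast
    field_simp [hz.1.ne_zero]
    linear_combination hroot
  refine ⟨mapsTo_renyiMap hz, c, 2 * c * n - b, c * n ^ 2 - b * n + a, hc, hroot', by ring, ?_⟩
  have hconj := (isGaloisConj_of_root hc.ne' hroot').unique (mapsTo_renyiMap hz).1
    ((isGaloisConj_of_root ha.ne' hroot).renyiMap hz)
  have hn : 2 ≤ n := two_le_ceil_neg_one_div hz.2
  replace hn : (2 : ℝ) ≤ n := by exact_mod_cast hn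
  rw [hconj]
  linarith [(neg_one_div_mem_Ioo hz').2]

theorem ceil_neg_neg_one_div_sub {z' : ℝ} (hz' : z' < -1) (n : ℤ) : ⌈-(-1 / z' - n)⌉ = n := by
  have := neg_one_div_mem_Ioo hz'
  rw [Int.ceil_eq_iff]
  constructor <;> linarith [this.1, this.2]

theorem injOn_renyiMap_reducedSet (D : ℤ) : InjOn renyiMap (reducedSet D) := by
  rintro z₁ ⟨hz₁, a₁, b₁, c₁, ha₁, hroot₁, -, hz₁'⟩ z₂ ⟨hz₂, a₂, b₂, c₂, ha₂, hroot₂, -, hz₂'⟩ heq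
  have hconj := ((isGaloisConj_of_root ha₁.ne' hroot₁).renyiMap hz₁).unique
    (mapsTo_renyiMap hz₁).1 (heq ▸ (isGaloisConj_of_root ha₂.ne' hroot₂).renyiMap hz₂)
  have hn : ⌈-1 / z₁⌉ = ⌈-1 / z₂⌉ := by
    rw [← ceil_neg_neg_one_div_sub hz₁' ⌈-1 / z₁⌉, hconj, ceil_neg_neg_one_div_sub hz₂']
  rw [renyiMap_of_mem hz₁, renyiMap_of_mem hz₂, hn, sub_left_inj] at heq
  simpa [neg_div, inv_inj] using heq

theorem reducedSet_subset_periodicPts (D : ℤ) : reducedSet D ⊆ periodicPts renyiMap :=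
  Set.Finite.subset_periodicPts (finite_reducedSet D) (mapsTo_renyiMap_reducedSet D)
    (injOn_renyiMap_reducedSet D)

/-- A quadratic irrational `y ∈ (-1,0)` is purely periodic under the Rényi map iff its
Galois conjugate `y' = -b/a - y` satisfies `y' < -1`. -/
theorem renyi_purely_periodic_iff
    (y : ℝ) (hmem : y ∈ Set.Ioo (-1 : ℝ) 0) (hirr : Irrational y)
    (a b c : ℤ) (ha : a ≠ 0)
    (hroot : (a : ℝ) * y ^ 2 + (b : ℝ) * y + (c : ℝ) = 0) :
    (∃ p : ℕ, 1 ≤ p ∧ renyiMap^[p] y = y) ↔ -(b : ℝ) / (a : ℝ) - y < -1 := by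
  change y ∈ periodicPts renyiMap ↔ _
  exact ⟨lt_neg_one_of_mem_periodicPts ⟨hirr, hmem⟩ (isGaloisConj_of_root ha hroot),
    fun hy' => reducedSet_subset_periodicPts _ (mem_reducedSet_of_root ⟨hirr, hmem⟩ ha hroot hy')⟩
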